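/- For every integer d ≥ 0 and every integer i with 0 ≤ i ≤ d, there exist real numbers 1 < y_1 < y_2 < … < y_i (pairwise distinct) such that s_i^d(w) = (w − 1)^{d+1−i} · Π_{r=1}^{i} (w − y_r); that is, s_i^d has the root w = 1 with multiplicity exactly d+1−i, and its remaining i roots are real, simple, and strictly greater than 1. -/

import Mathlib

/-- `s_i^d(w) = Σ_{j=0}^{d+1} (−1)^j C(d+1, j) (j+1)^i w^{d+1−j}` (as a real function). -/
noncomputable def eckhoffS (d i : ℕ) (w : ℝ) : ℝ :=
  ∑ j ∈ Finset.range (d + 2),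
    (-1 : ℝ) ^ j * ((d + 1).choose j : ℝ) * ((j : ℝ) + 1) ^ i * w ^ (d + 1 - j)

/-!
The operator `(n + 1) - w d/dw` multiplies the coefficient of `w ^ (n - j)` by `j + 1`, so with
`n = d + 1` it maps `s_i^d` to `s_{i+1}^d`, and `s_0^d = (w - 1) ^ n`.
If `s_i^d = (w - 1) ^ (m + 1) Q` with `Q` monic and vanishing exactly at `1 < y_1 < ⋯ < y_i`,
then `s_{i+1}^d = (w - 1) ^ m R` with `R = (n + 1)(w - 1)Q - (m + 1)wQ - w(w - 1)Q'`.
Now `R(1) = -(m + 1) Q(1)` and `R(y_r) = -y_r (y_r - 1) Q'(y_r)`, so `R` alternates in sign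
along `1, y_1, …, y_i` and is positive near `+∞`: the intermediate value theorem gives `i + 1`
roots interlacing with `1, y_1, …, y_i`, which are all the roots since `R` is monic of degree
`i + 1`.
-/

open Polynomial Finset

theorem Finset.neg_one_pow_card_filter_neg_mul_prod_pos {ι R : Type*} [CommRing R] [LinearOrder R]
    [IsStrictOrderedRing R] (s : Finset ι) {f : ι → R} (hf : ∀ j ∈ s, f j ≠ 0) :
    0 < (-1) ^ #{j ∈ s | f j < 0} * ∏ j ∈ s, f j := by
  classical
  induction s using Finset.induction_on with
  | empty => simp
  | insert a s ha ih =>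
    have ih := ih fun j hj => hf j (mem_insert_of_mem hj)
    rw [filter_insert, prod_insert ha]
    rcases (hf a (mem_insert_self a s)).lt_or_gt with hneg | hpos
    · rw [if_pos hneg, card_insert_of_notMem fun h => ha (mem_filter.1 h).1, pow_succ]
      nlinarith
    · rw [if_neg hpos.not_gt]
      nlinarith

namespace Polynomial

theorem exists_isRoot_mem_Ioo_of_eval_mul_neg (p : ℝ[X]) {a b : ℝ} (hab : a ≤ b)
    (h : p.eval a * p.eval b < 0) : ∃ z ∈ Set.Ioo a b, p.IsRoot z := by
  have hc : ContinuousOn (fun x => p.eval x) (Set.Icc a b) := p.continuousOn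
  rcases mul_neg_iff.mp h with ⟨ha, hb⟩ | ⟨ha, hb⟩
  · exact intermediate_value_Ioo' hab hc ⟨hb, ha⟩
  · exact intermediate_value_Ioo hab hc ⟨ha, hb⟩

/-- The roots interlace: `z k ∈ (t k, t (k + 1))` for `k < N`, and `t N < z N`. -/
theorem exists_strictMono_isRoot_of_alternating {p : ℝ[X]} (hdeg : 0 < p.degree)
    (hp : 0 ≤ p.leadingCoeff) {N : ℕ} {t : Fin (N + 1) → ℝ} (ht : StrictMono t)
    (hsign : ∀ k : Fin (N + 1), (-1) ^ (N - k) * p.eval (t k) < 0) :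
    ∃ z : Fin (N + 1) → ℝ, StrictMono z ∧ (∀ k, t k < z k) ∧ ∀ k, p.IsRoot (z k) := by
  have root_after : ∀ k, ∃ z, t k < z ∧ (∀ j, k < j → z < t j) ∧ p.IsRoot z := by
    intro k
    rcases k.eq_castSucc_or_eq_last with ⟨k, rfl⟩ | rfl
    · have hopp : p.eval (t k.castSucc) * p.eval (t k.succ) < 0 := by
        have h1 := hsign k.castSucc
        have h2 := hsign k.succ
        obtain ⟨e, he⟩ : ∃ e, N - (k : ℕ) = e + 1 := ⟨N - (k + 1), by omega⟩
        simp only [Fin.val_castSucc, Fin.val_succ, he, pow_succ,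
          show N - (k + 1) = e by omega] at h1 h2
        have hsq : ((-1 : ℝ) ^ e) ^ 2 = 1 := by rw [← pow_mul, mul_comm, pow_mul]; norm_num
        nlinarith [mul_pos_of_neg_of_neg h1 h2]
      obtain ⟨z, hz, hroot⟩ :=
        p.exists_isRoot_mem_Ioo_of_eval_mul_neg (ht k.castSucc_lt_succ).le hopp
      exact ⟨z, hz.1, fun j hj => hz.2.trans_le (ht.monotone (Fin.castSucc_lt_iff_succ_le.1 hj)),
        hroot⟩
    · have hneg : p.eval (t (Fin.last N)) < 0 := by simpa using hsign (Fin.last N)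
      have hpos : ∀ᶠ x in Filter.atTop, t (Fin.last N) < x ∧ 0 < p.eval x :=
        (Filter.eventually_gt_atTop _).and
          ((p.tendsto_atTop_of_leadingCoeff_nonneg hdeg hp).eventually_gt_atTop 0)
      obtain ⟨b, hb, hpb⟩ := hpos.exists
      obtain ⟨z, hz, hroot⟩ := p.exists_isRoot_mem_Ioo_of_eval_mul_neg hb.le (by nlinarith)
      exact ⟨z, hz.1, fun j hj => absurd hj (Fin.le_last j).not_gt, hroot⟩
  choose z hz using root_after
  exact ⟨z, fun k j hkj => ((hz k).2.1 j hkj).trans (hz j).1, fun k => (hz k).1,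
    fun k => (hz k).2.2⟩

theorem Monic.eq_nodal_of_isRoot {R : Type*} [CommRing R] [IsDomain R] {p : R[X]} (hp : p.Monic)
    {n : ℕ} (hdeg : p.natDegree = n) {z : Fin n → R} (hz : Function.Injective z)
    (hroot : ∀ k, p.IsRoot (z k)) : p = Lagrange.nodal univ z := by
  have hdeg' : p.degree = n := by rw [degree_eq_natDegree hp.ne_zero, hdeg]
  refine eq_of_degree_le_of_eval_index_eq univ hz.injOn (by simp [hdeg']) ?_ ?_ fun k _ => ?_
  · rw [hdeg', Lagrange.degree_nodal, card_univ, Fintype.card_fin]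
  · rw [hp.leadingCoeff, Lagrange.nodal_monic.leadingCoeff]
  · rw [(hroot k).eq_zero, Lagrange.eval_nodal_at_node (mem_univ k)]

theorem X_mul_derivative_X_pow {R : Type*} [CommSemiring R] (k : ℕ) :
    X * derivative (X ^ k : R[X]) = C (k : R) * X ^ k := by
  cases k with
  | zero => simp
  | succ k => rw [derivative_X_pow, Nat.add_sub_cancel, mul_left_comm, ← pow_succ']

theorem C_mul_sub_X_mul_derivative_X_sub_one_pow_mul {R : Type*} [CommRing R] (c : R) (m : ℕ)
    (Q : R[X]) :
    C c * ((X - 1) ^ (m + 1) * Q) - X * derivative ((X - 1) ^ (m + 1) * Q) =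
      (X - 1) ^ m *
        (C c * (X - 1) * Q - C ((m : R) + 1) * X * Q - X * (X - 1) * derivative Q) := by
  simp only [derivative_mul, derivative_pow_succ, derivative_sub, derivative_X, derivative_one,
    sub_zero, mul_one]
  ring

end Polynomial

theorem neg_one_pow_mul_eval_nodal_pos {n : ℕ} {y : Fin n → ℝ} {x : ℝ} (hx : ∀ r, x < y r) :
    0 < (-1) ^ n * (Lagrange.nodal univ y).eval x := by
  have hpos := neg_one_pow_card_filter_neg_mul_prod_pos univ (f := fun r => x - y r)
    fun r _ => (sub_neg.2 (hx r)).ne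
  rwa [filter_true_of_mem fun r _ => sub_neg.2 (hx r), card_univ, Fintype.card_fin,
    ← Lagrange.eval_nodal] at hpos

theorem neg_one_pow_mul_eval_derivative_nodal_pos {n : ℕ} {y : Fin n → ℝ} (hy : StrictMono y)
    (r : Fin n) : 0 < (-1) ^ (n - 1 - r) * (derivative (Lagrange.nodal univ y)).eval (y r) := by
  have hpos := neg_one_pow_card_filter_neg_mul_prod_pos (univ.erase r) (f := fun s => y r - y s)
    fun s hs => sub_ne_zero.2 (hy.injective.ne (ne_of_mem_erase hs).symm)
  have hfilter : {s ∈ univ.erase r | y r - y s < 0} = Ioi r := by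
    ext s
    simp only [mem_filter, mem_erase, mem_univ, and_true, sub_neg, hy.lt_iff_lt, mem_Ioi]
    exact ⟨And.right, fun h => ⟨h.ne', h⟩⟩
  rwa [hfilter, Fin.card_Ioi, ← Lagrange.eval_nodal,
    ← Lagrange.eval_nodal_derivative_eval_node_eq (mem_univ r)] at hpos

/-- `eckhoffPoly (d + 1) i` is `s_i^d`; indexing by `n = d + 1` keeps the recursion in `i` clean. -/
noncomputable def eckhoffPoly (n i : ℕ) : ℝ[X] :=
  ∑ j ∈ range (n + 1), C ((-1) ^ j * (n.choose j : ℝ) * ((j : ℝ) + 1) ^ i) * X ^ (n - j)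

theorem eval_eckhoffPoly (d i : ℕ) (w : ℝ) : (eckhoffPoly (d + 1) i).eval w = eckhoffS d i w := by
  simp [eckhoffPoly, eckhoffS, eval_finsetSum]

theorem eckhoffPoly_zero (n : ℕ) : eckhoffPoly n 0 = (X - 1) ^ n := by
  rw [← neg_add_eq_sub, add_pow, eckhoffPoly]
  refine sum_congr rfl fun j _ => ?_
  simp only [pow_zero, mul_one, map_mul, map_pow, map_neg, map_one, map_natCast]
  ring

theorem eckhoffPoly_succ (n i : ℕ) :
    eckhoffPoly n (i + 1) =
      C ((n : ℝ) + 1) * eckhoffPoly n i - X * derivative (eckhoffPoly n i) := by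
  simp only [eckhoffPoly, derivative_sum, derivative_C_mul, mul_sum, ← sum_sub_distrib]
  refine sum_congr rfl fun j hj => ?_
  rw [mul_left_comm X, X_mul_derivative_X_pow, Nat.cast_sub (Nat.lt_succ_iff.1 (mem_range.1 hj))]
  simp only [map_mul, map_pow, map_neg, map_one, map_add, map_sub, map_natCast]
  ring

theorem eckhoffPoly_natDegree_le (n i : ℕ) : (eckhoffPoly n i).natDegree ≤ n :=
  natDegree_sum_le_of_forall_le _ _ fun j _ =>
    (natDegree_C_mul_le _ _).trans ((natDegree_X_pow_le _).trans (Nat.sub_le n j))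

theorem eckhoffPoly_coeff_self (n i : ℕ) : (eckhoffPoly n i).coeff n = 1 := by
  rw [eckhoffPoly, finsetSum_coeff, sum_eq_single_of_mem 0 (mem_range.2 n.succ_pos)]
  · simp
  · intro j hj hj0
    rw [coeff_C_mul, coeff_X_pow, if_neg (by have := mem_range.1 hj; omega), mul_zero]

theorem eckhoffPoly_monic (n i : ℕ) : (eckhoffPoly n i).Monic :=
  monic_of_natDegree_le_of_coeff_eq_one n (eckhoffPoly_natDegree_le n i)
    (eckhoffPoly_coeff_self n i)

theorem natDegree_eckhoffPoly (n i : ℕ) : (eckhoffPoly n i).natDegree = n :=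
  natDegree_eq_of_le_of_coeff_ne_zero (eckhoffPoly_natDegree_le n i)
    (by rw [eckhoffPoly_coeff_self]; exact one_ne_zero)

theorem exists_eq_nodal_of_eq_sub_X_mul_derivative_nodal {i m : ℕ} {c : ℝ} {y : Fin i → ℝ}
    (hy : StrictMono y) (hy1 : ∀ r, 1 < y r) {R : ℝ[X]}
    (hR : R = C c * (X - 1) * Lagrange.nodal univ y - C ((m : ℝ) + 1) * X * Lagrange.nodal univ y
      - X * (X - 1) * derivative (Lagrange.nodal univ y))
    (hmonic : R.Monic) (hdeg : R.natDegree = i + 1) :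
    ∃ z : Fin (i + 1) → ℝ, StrictMono z ∧ (∀ k, 1 < z k) ∧ R = Lagrange.nodal univ z := by
  set Q := Lagrange.nodal univ y
  set t : Fin (i + 1) → ℝ := Fin.cons 1 y
  have ht : StrictMono t := Fin.strictMono_cons.2 ⟨hy1, hy⟩
  have hsign : ∀ k : Fin (i + 1), (-1) ^ (i - k) * R.eval (t k) < 0 := by
    refine Fin.cases ?_ fun r => ?_
    · have hR1 : R.eval 1 = -(((m : ℝ) + 1) * Q.eval 1) := by simp [hR]
      have hQ1 := neg_one_pow_mul_eval_nodal_pos (y := y) hy1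
      simp only [t, Fin.cons_zero, Fin.val_zero, Nat.sub_zero, hR1]
      nlinarith
    · have hRy : R.eval (y r) = -(y r * (y r - 1) * (derivative Q).eval (y r)) := by
        simp [hR, Q, Lagrange.eval_nodal_at_node (mem_univ r)]
      have hQ' := neg_one_pow_mul_eval_derivative_nodal_pos hy r
      have hyr : 0 < y r * (y r - 1) := mul_pos (one_pos.trans (hy1 r)) (sub_pos.2 (hy1 r))
      simp only [t, Fin.cons_succ, Fin.val_succ, hRy, show i - (r + 1) = i - 1 - r by omega]
      nlinarith
  have hdeg_pos : 0 < R.degree := natDegree_pos_iff_degree_pos.1 (by omega)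
  obtain ⟨z, hz, htz, hroot⟩ := exists_strictMono_isRoot_of_alternating hdeg_pos
    (hmonic.leadingCoeff ▸ zero_le_one) ht hsign
  refine ⟨z, hz, fun k => ?_, hmonic.eq_nodal_of_isRoot hdeg hz.injective hroot⟩
  calc (1 : ℝ) = t 0 := rfl
    _ ≤ t k := ht.monotone (Fin.zero_le k)
    _ < z k := htz k

theorem eckhoffPoly_eq_X_sub_one_pow_mul_nodal {n i : ℕ} (hi : i ≤ n) :
    ∃ y : Fin i → ℝ, StrictMono y ∧ (∀ r, 1 < y r) ∧
      eckhoffPoly n i = (X - 1) ^ (n - i) * Lagrange.nodal univ y := by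
  induction i with
  | zero => exact ⟨Fin.elim0, fun a => a.elim0, fun a => a.elim0, by simp [eckhoffPoly_zero]⟩
  | succ i ih =>
    obtain ⟨y, hy, hy1, hS⟩ := ih (by omega)
    obtain ⟨m, hm⟩ : ∃ m, n - i = m + 1 := ⟨n - (i + 1), by omega⟩
    set Q := Lagrange.nodal univ y
    set R := C ((n : ℝ) + 1) * (X - 1) * Q - C ((m : ℝ) + 1) * X * Q - X * (X - 1) * derivative Q
      with hR
    have hfactor : eckhoffPoly n (i + 1) = (X - 1) ^ m * R := by
      rw [eckhoffPoly_succ, hS, hm, C_mul_sub_X_mul_derivative_X_sub_one_pow_mul]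
    have hXm : ((X - 1) ^ m : ℝ[X]).Monic := by simpa using (monic_X_sub_C (1 : ℝ)).pow m
    have hmonic := eckhoffPoly_monic n (i + 1)
    have hdeg := natDegree_eckhoffPoly n (i + 1)
    rw [hfactor] at hmonic hdeg
    have hRmonic : R.Monic := hXm.of_mul_monic_left hmonic
    have hRdeg : R.natDegree = i + 1 := by
      have hX1 : (X - 1 : ℝ[X]).natDegree = 1 := by simpa using natDegree_X_sub_C (1 : ℝ)
      rw [hXm.natDegree_mul hRmonic, natDegree_pow, hX1, mul_one] at hdeg
      omega
    obtain ⟨z, hz, hz1, hRz⟩ :=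
      exists_eq_nodal_of_eq_sub_X_mul_derivative_nodal hy hy1 hR hRmonic hRdeg
    exact ⟨z, hz, hz1, by rw [hfactor, hRz, show n - (i + 1) = m by omega]⟩

/-- for `0 ≤ i ≤ d`, `s_i^d(w) = (w−1)^{d+1−i} Π_{r=1}^{i} (w − y_r)` with
`1 < y_1 < … < y_i` real, simple roots. -/
theorem eckhoffS_root_structure (d i : ℕ) (hi : i ≤ d) :
    ∃ y : Fin i → ℝ, StrictMono y ∧ (∀ r, 1 < y r) ∧
      ∀ w : ℝ, eckhoffS d i w = (w - 1) ^ (d + 1 - i) * ∏ r : Fin i, (w - y r) := by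
  obtain ⟨y, hy, hy1, hS⟩ := eckhoffPoly_eq_X_sub_one_pow_mul_nodal (Nat.le_succ_of_le hi)
  refine ⟨y, hy, hy1, fun w => ?_⟩
  rw [← eval_eckhoffPoly, hS, eval_mul, eval_pow, eval_sub, eval_X, eval_one, Lagrange.eval_nodal]
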